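/- For every integer n ≥ 1 there is a map Φ: M_n → H_{n−1} such that every fiber of Φ has exactly two elements, for each μ∈M_n either ρ(μ)=y²·ρ(Φ(μ)) or ρ(μ)=yt·ρ(Φ(μ)), with each of the two cases occurring for exactly one element of each fiber; consequently ρ(M_n) = (y²+yt)·ρ(H_{n−1}) in ℤ[y,t,q]. -/

import Mathlib

open Finset

/-- A step of a bicolored Motzkin path: up, down, straight level, wavy level. -/
inductive MStep where
  | U : MStep
  | D : MStep
  | L : MStep
  | W : MStep
deriving DecidableEq

/-- A weighted bicolored Motzkin path of length `n`: a sequence of steps together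
with, for each step, the triple `(a, b, c)` of exponents of its monomial weight
`y^a t^b q^c`. -/
structure WPath (n : ℕ) where
  step : Fin n → MStep
  wt : Fin n → ℕ × ℕ × ℕ

/-- The height increment of a step. -/
def dh : MStep → ℤ
  | MStep.U => 1
  | MStep.D => -1
  | MStep.L => 0
  | MStep.W => 0

/-- The height (of the starting point) of the `j`-th step; `ht μ n` is the final
height. -/
def ht {n : ℕ} (μ : WPath n) (j : ℕ) : ℤ :=
  ∑ k ∈ Finset.range j, if h : k < n then dh (μ.step ⟨k, h⟩) else 0

/-- The underlying path is a Motzkin path: stays weakly above the `x`-axis and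
ends on it. -/
def IsMotzkin {n : ℕ} (μ : WPath n) : Prop :=
  (∀ j ≤ n, 0 ≤ ht μ j) ∧ ht μ n = 0

/-- `y`, as the variable `X 0` of `ℤ[y,t,q]`. -/
noncomputable def yv : MvPolynomial (Fin 3) ℤ := MvPolynomial.X 0

/-- `t`, as the variable `X 1` of `ℤ[y,t,q]`. -/
noncomputable def tv : MvPolynomial (Fin 3) ℤ := MvPolynomial.X 1

/-- `q`, as the variable `X 2` of `ℤ[y,t,q]`. -/
noncomputable def qv : MvPolynomial (Fin 3) ℤ := MvPolynomial.X 2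

/-- The weight `ρ(μ) ∈ ℤ[y,t,q]`: the product of the step weights `y^a t^b q^c`. -/
noncomputable def rho {n : ℕ} (μ : WPath n) : MvPolynomial (Fin 3) ℤ :=
  ∏ j : Fin n, yv ^ (μ.wt j).1 * tv ^ (μ.wt j).2.1 * qv ^ (μ.wt j).2.2

/-- The exponent of `t` in the monomial `ρ(μ)`. -/
def tExp {n : ℕ} (μ : WPath n) : ℕ := ∑ j : Fin n, (μ.wt j).2.1

/-- The weight `w` is `y² q^c` with `lo ≤ c ≤ hi`. -/
def wY2 (w : ℕ × ℕ × ℕ) (lo hi : ℤ) : Prop :=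
  w.1 = 2 ∧ w.2.1 = 0 ∧ lo ≤ (w.2.2 : ℤ) ∧ (w.2.2 : ℤ) ≤ hi

/-- The weight `w` is `y t q^c` with `lo ≤ c ≤ hi`. -/
def wYT (w : ℕ × ℕ × ℕ) (lo hi : ℤ) : Prop :=
  w.1 = 1 ∧ w.2.1 = 1 ∧ lo ≤ (w.2.2 : ℤ) ∧ (w.2.2 : ℤ) ≤ hi

/-- The weight `w` is `q^c` with `lo ≤ c ≤ hi`. -/
def wQ (w : ℕ × ℕ × ℕ) (lo hi : ℤ) : Prop :=
  w.1 = 0 ∧ w.2.1 = 0 ∧ lo ≤ (w.2.2 : ℤ) ∧ (w.2.2 : ℤ) ≤ hi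

/-- `μ ∈ M_n`: no wavy level step on the `x`-axis, and at each step of height
`h`: up and straight level steps carry `y²q^c` (`c ≤ h`) or `ytq^c`
(`h ≤ c ≤ 2h`); wavy level steps (at height `h ≥ 1`) carry `q^c` (`c ≤ h-1`) or
`ytq^c` (`h ≤ c ≤ 2h-1`); down steps at height `h+1` carry `q^c` (`c ≤ h`) or
`ytq^c` (`h+1 ≤ c ≤ 2h+1`). -/
def Mcond {n : ℕ} (μ : WPath n) : Prop :=
  IsMotzkin μ ∧ ∀ j : Fin n,
    (μ.step j = MStep.U →
      wY2 (μ.wt j) 0 (ht μ j) ∨ wYT (μ.wt j) (ht μ j) (2 * ht μ j)) ∧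
    (μ.step j = MStep.L →
      wY2 (μ.wt j) 0 (ht μ j) ∨ wYT (μ.wt j) (ht μ j) (2 * ht μ j)) ∧
    (μ.step j = MStep.W →
      1 ≤ ht μ j ∧
        (wQ (μ.wt j) 0 (ht μ j - 1) ∨ wYT (μ.wt j) (ht μ j) (2 * ht μ j - 1))) ∧
    (μ.step j = MStep.D →
      wQ (μ.wt j) 0 (ht μ j - 1) ∨ wYT (μ.wt j) (ht μ j) (2 * ht μ j - 1))

/-- `μ ∈ H_n`: at each step of height `h`: up steps carry `y²q^c` (`c ≤ h+1`) or
`ytq^c` (`h+1 ≤ c ≤ 2h+2`); straight level steps carry `q^c` (`c ≤ h`) or `ytq^c`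
(`h+1 ≤ c ≤ 2h+1`); wavy level steps carry `y²q^c` (`c ≤ h`) or `ytq^c`
(`h ≤ c ≤ 2h`); down steps at height `h+1` carry `q^c` (`c ≤ h`) or `ytq^c`
(`h+1 ≤ c ≤ 2h+1`). -/
def Hcond {n : ℕ} (μ : WPath n) : Prop :=
  IsMotzkin μ ∧ ∀ j : Fin n,
    (μ.step j = MStep.U →
      wY2 (μ.wt j) 0 (ht μ j + 1) ∨ wYT (μ.wt j) (ht μ j + 1) (2 * ht μ j + 2)) ∧
    (μ.step j = MStep.L →
      wQ (μ.wt j) 0 (ht μ j) ∨ wYT (μ.wt j) (ht μ j + 1) (2 * ht μ j + 1)) ∧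
    (μ.step j = MStep.W →
      wY2 (μ.wt j) 0 (ht μ j) ∨ wYT (μ.wt j) (ht μ j) (2 * ht μ j)) ∧
    (μ.step j = MStep.D →
      wQ (μ.wt j) 0 (ht μ j - 1) ∨ wYT (μ.wt j) (ht μ j) (2 * ht μ j - 1))

/-- The up step `i` and the down step `j` form a matching pair: they face each
other, i.e. the horizontal segment between their midpoints stays under the path. -/
def Matching {n : ℕ} (μ : WPath n) (i j : Fin n) : Prop :=
  (i : ℕ) < (j : ℕ) ∧ μ.step i = MStep.U ∧ μ.step j = MStep.D ∧
    ht μ j = ht μ i + 1 ∧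
    ∀ k : ℕ, (i : ℕ) < k → k < (j : ℕ) → ht μ i + 1 ≤ ht μ k

/-!
Write each step as a pair of half-steps of a Dyck path: `U = ↗↗`, `L = ↗↘`, `W = ↘↗`,
`D = ↘↘`. A path of `M_n` is then a Dyck path of length `2n` that also stays weakly above
the axis at the midpoints (this is the condition on wavy steps); in particular it starts with
`↗` and ends with `↘`. Deleting these two half-steps and pairing the remaining ones afresh
gives a path `Φ μ` of length `n - 1`, and the height of `Φ μ` before its `j`-th step is the
height of `μ` in the middle of its `j`-th step, minus a half. Under this shift the weight
ranges prescribed by `M_n` at the steps `2, …, n` become exactly those prescribed by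
`H_{n-1}`, while the first step of `μ`, at height `0`, carries `y²` or `yt`. So `Φ` is
inverted by prepending either weight, which gives the two-element fibres.
-/

variable {m n : ℕ}

namespace MStep

def firstUp : MStep → Bool
  | U => true
  | L => true
  | W => false
  | D => false

def secondUp : MStep → Bool
  | U => true
  | W => true
  | L => false
  | D => false

def ofHalves : Bool → Bool → MStep
  | true, true => U
  | true, false => L
  | false, true => W
  | false, false => D

@[simp]
lemma firstUp_ofHalves (a b : Bool) : (ofHalves a b).firstUp = a := by
  cases a <;> cases b <;> rfl

@[simp]
lemma secondUp_ofHalves (a b : Bool) : (ofHalves a b).secondUp = b := by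
  cases a <;> cases b <;> rfl

@[simp]
lemma ofHalves_firstUp_secondUp (s : MStep) : ofHalves s.firstUp s.secondUp = s := by
  cases s <;> rfl

instance : Finite MStep :=
  Finite.of_injective (fun s => (s.firstUp, s.secondUp)) fun s t h => by
    rw [← ofHalves_firstUp_secondUp s, ← ofHalves_firstUp_secondUp t]
    simp_all

end MStep

lemma dh_eq (s : MStep) : dh s = s.firstUp.toInt + s.secondUp.toInt - 1 := by
  cases s <;> rfl

lemma Bool.toInt_nonneg (b : Bool) : 0 ≤ b.toInt := by
  cases b <;> decide

lemma Bool.toInt_le_one (b : Bool) : b.toInt ≤ 1 := by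
  cases b <;> decide

lemma dh_le_one (s : MStep) : dh s ≤ 1 := by
  cases s <;> decide

lemma ht_zero (μ : WPath n) : ht μ 0 = 0 := by
  simp [ht]

lemma ht_succ (μ : WPath n) (j : Fin n) : ht μ (j + 1) = ht μ j + dh (μ.step j) := by
  simp [ht, Finset.sum_range_succ, j.isLt]

lemma ht_le (μ : WPath n) (j : ℕ) : ht μ j ≤ j := by
  calc ht μ j ≤ ∑ _k ∈ range j, (1 : ℤ) :=
        Finset.sum_le_sum fun k _ => by split_ifs <;> simp [dh_le_one]
    _ = j := by simp

/-- `Adm true h` is `{y², …, y²q^h} ∪ {ytq^h, …, ytq^{2h}}` and `Adm false h` is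
`{1, …, q^{h-1}} ∪ {ytq^h, …, ytq^{2h-1}}`. A step `s` of `M_n` at height `h` must carry a
weight in `Adm s.firstUp h`, a step `s` of `H_n` one in `Adm s.secondUp (h + s.firstUp)`. -/
def Adm : Bool → ℕ × ℕ × ℕ → ℤ → Prop
  | true, w, h => wY2 w 0 h ∨ wYT w h (2 * h)
  | false, w, h => wQ w 0 (h - 1) ∨ wYT w h (2 * h - 1)

lemma Adm.bound {b : Bool} {w : ℕ × ℕ × ℕ} {h : ℤ} (hw : Adm b w h) :
    w.1 ≤ 2 ∧ w.2.1 ≤ 1 ∧ (w.2.2 : ℤ) ≤ 2 * h := by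
  cases b <;> simp only [Adm, wY2, wYT, wQ] at hw <;> omega

lemma adm_true_zero_iff {w : ℕ × ℕ × ℕ} :
    Adm true w 0 ↔ w = (2, 0, 0) ∨ w = (1, 1, 0) := by
  obtain ⟨a, b, c⟩ := w
  simp only [Adm, wY2, wYT, Prod.mk.injEq]
  omega

lemma mcond_step_iff (s : MStep) (w : ℕ × ℕ × ℕ) (h : ℤ) :
    ((s = .U → wY2 w 0 h ∨ wYT w h (2 * h)) ∧
      (s = .L → wY2 w 0 h ∨ wYT w h (2 * h)) ∧
      (s = .W → 1 ≤ h ∧ (wQ w 0 (h - 1) ∨ wYT w h (2 * h - 1))) ∧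
      (s = .D → wQ w 0 (h - 1) ∨ wYT w h (2 * h - 1))) ↔
    (s = .W → 1 ≤ h) ∧ Adm s.firstUp w h := by
  cases s <;> simp [Adm, MStep.firstUp]

lemma hcond_step_iff (s : MStep) (w : ℕ × ℕ × ℕ) (h : ℤ) :
    ((s = .U → wY2 w 0 (h + 1) ∨ wYT w (h + 1) (2 * h + 2)) ∧
      (s = .L → wQ w 0 h ∨ wYT w (h + 1) (2 * h + 1)) ∧
      (s = .W → wY2 w 0 h ∨ wYT w h (2 * h)) ∧
      (s = .D → wQ w 0 (h - 1) ∨ wYT w h (2 * h - 1))) ↔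
    Adm s.secondUp w (h + s.firstUp.toInt) := by
  cases s <;> simp only [Adm, MStep.firstUp, MStep.secondUp, wY2, wYT, wQ] <;> simp <;> omega

lemma mcond_iff (μ : WPath n) :
    Mcond μ ↔ IsMotzkin μ ∧ (∀ j, μ.step j = .W → 1 ≤ ht μ j) ∧
      ∀ j, Adm (μ.step j).firstUp (μ.wt j) (ht μ j) := by
  unfold Mcond
  simp only [mcond_step_iff]
  simp only [forall_and]

lemma hcond_iff (ν : WPath n) :
    Hcond ν ↔ IsMotzkin ν ∧
      ∀ j, Adm (ν.step j).secondUp (ν.wt j) (ht ν j + (ν.step j).firstUp.toInt) := by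
  simp only [Hcond, hcond_step_iff]

lemma one_le_ht_add_firstUp {μ : WPath n} (hμ : IsMotzkin μ)
    (hW : ∀ j, μ.step j = .W → 1 ≤ ht μ j) (j : Fin n) :
    1 ≤ ht μ j + (μ.step j).firstUp.toInt := by
  have hsucc := ht_succ μ j
  have := hμ.1 j j.isLt.le
  have := hμ.1 (j + 1) j.isLt
  have := hW j
  cases hs : μ.step j <;> simp_all [dh, MStep.firstUp]

lemma Hcond.wt_mem {ν : WPath n} (hν : Hcond ν) (j : Fin n) :
    ν.wt j ∈ range 3 ×ˢ range 2 ×ˢ range (2 * n + 1) := by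
  have hadm := ((hcond_iff ν).1 hν).2 j
  have := hadm.bound
  have := Bool.toInt_le_one (ν.step j).firstUp
  have := ht_le ν j
  have := j.isLt
  simp only [mem_product, mem_range]
  omega

lemma finite_setOf_hcond : {ν : WPath n | Hcond ν}.Finite := by
  let T : Finset (ℕ × ℕ × ℕ) := range 3 ×ˢ range 2 ×ˢ range (2 * n + 1)
  have hfin : (Set.univ ×ˢ Set.univ.pi fun _ : Fin n => (T : Set (ℕ × ℕ × ℕ))).Finite :=
    (Set.finite_univ (α := Fin n → MStep)).prod (Set.Finite.pi fun _ => T.finite_toSet)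
  refine (hfin.image fun p => WPath.mk p.1 p.2).subset fun ν hν => ?_
  exact ⟨(ν.step, ν.wt), ⟨trivial, fun j _ => Hcond.wt_mem hν j⟩, rfl⟩

noncomputable def wtMonomial (w : ℕ × ℕ × ℕ) : MvPolynomial (Fin 3) ℤ :=
  yv ^ w.1 * tv ^ w.2.1 * qv ^ w.2.2

lemma wtMonomial_y2 : wtMonomial (2, 0, 0) = yv ^ 2 := by
  simp [wtMonomial]

lemma wtMonomial_yt : wtMonomial (1, 1, 0) = yv * tv := by
  simp [wtMonomial]

lemma wtMonomial_y2_ne_yt : wtMonomial (2, 0, 0) ≠ wtMonomial (1, 1, 0) := by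
  rw [wtMonomial_y2, wtMonomial_yt]
  intro h
  simpa [yv, tv] using
    congrArg (MvPolynomial.eval fun i : Fin 3 => if i = 0 then (1 : ℤ) else 0) h

lemma rho_ne_zero (μ : WPath n) : rho μ ≠ 0 :=
  Finset.prod_ne_zero_iff.2 fun _ _ => by simp [yv, tv, qv]

def phi (μ : WPath (m + 1)) : WPath m where
  step j := .ofHalves (μ.step j.castSucc).secondUp (μ.step j.succ).firstUp
  wt j := μ.wt j.succ

/-- `firstUpAt ν i` is `false` for `i ≥ m`: the half-step `↘` closing the prepended path. -/
def firstUpAt (ν : WPath m) (i : ℕ) : Bool :=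
  if h : i < m then (ν.step ⟨i, h⟩).firstUp else false

def psi (w : ℕ × ℕ × ℕ) (ν : WPath m) : WPath (m + 1) where
  step := Fin.cons (.ofHalves true (firstUpAt ν 0))
    fun k => .ofHalves (ν.step k).secondUp (firstUpAt ν (k + 1))
  wt := Fin.cons w ν.wt

lemma firstUpAt_fin (ν : WPath m) (i : Fin m) : firstUpAt ν i = (ν.step i).firstUp := by
  simp [firstUpAt]

lemma firstUpAt_phi {μ : WPath (m + 1)} (hlast : (μ.step (Fin.last m)).secondUp = false)
    (i : Fin (m + 1)) : firstUpAt (phi μ) i = (μ.step i).secondUp := by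
  by_cases hi : (i : ℕ) < m
  · simp [firstUpAt, hi, phi]
  · obtain rfl : i = Fin.last m := Fin.ext (by simp only [Fin.val_last]; omega)
    simp [firstUpAt, hlast]

@[simp]
lemma psi_wt_zero (w : ℕ × ℕ × ℕ) (ν : WPath m) : (psi w ν).wt 0 = w := rfl

@[simp]
lemma firstUp_psi_step_zero (w : ℕ × ℕ × ℕ) (ν : WPath m) :
    ((psi w ν).step 0).firstUp = true := by
  simp [psi]

lemma secondUp_psi_step (w : ℕ × ℕ × ℕ) (ν : WPath m) (j : Fin (m + 1)) :
    ((psi w ν).step j).secondUp = firstUpAt ν j := by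
  cases j using Fin.cases <;> simp [psi]

@[simp]
lemma secondUp_psi_step_last (w : ℕ × ℕ × ℕ) (ν : WPath m) :
    ((psi w ν).step (Fin.last m)).secondUp = false := by
  simp [secondUp_psi_step, firstUpAt]

@[simp]
lemma phi_psi (w : ℕ × ℕ × ℕ) (ν : WPath m) : phi (psi w ν) = ν := by
  obtain ⟨step, wt⟩ := ν
  simp only [phi, secondUp_psi_step, Fin.val_castSucc, firstUpAt_fin, WPath.mk.injEq]
  refine ⟨funext fun j => ?_, funext fun j => rfl⟩
  simp [psi]

lemma psi_phi {μ : WPath (m + 1)} (hfirst : (μ.step 0).firstUp)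
    (hlast : (μ.step (Fin.last m)).secondUp = false) : psi (μ.wt 0) (phi μ) = μ := by
  obtain ⟨step, wt⟩ := μ
  simp only [psi, WPath.mk.injEq]
  refine ⟨funext fun j => ?_, Fin.cons_self_tail wt⟩
  cases j using Fin.cases with
  | zero =>
    have h := MStep.ofHalves_firstUp_secondUp (step 0)
    have h' := firstUpAt_phi hlast 0
    rw [hfirst] at h
    rw [Fin.val_zero] at h'
    simpa [h'] using h
  | succ k =>
    have := firstUpAt_phi hlast k.succ
    simp_all [phi]

lemma psi_inj {w w' : ℕ × ℕ × ℕ} {ν ν' : WPath m} :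
    psi w ν = psi w' ν' ↔ w = w' ∧ ν = ν' :=
  ⟨fun h => ⟨by simpa using congrArg (·.wt 0) h, by simpa using congrArg phi h⟩,
    fun ⟨hw, hν⟩ => hw ▸ hν ▸ rfl⟩

section Phi

variable {μ : WPath (m + 1)}

lemma ht_phi_add_one (hfirst : (μ.step 0).firstUp) (j : Fin (m + 1)) :
    ht (phi μ) j + 1 = ht μ j + (μ.step j).firstUp.toInt := by
  induction j using Fin.induction with
  | zero => simp [ht_zero, hfirst]
  | succ i ih =>
    have hphi := ht_succ (phi μ) i
    have hμ := ht_succ μ i.castSucc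
    simp only [Fin.val_succ, Fin.val_castSucc, dh_eq, phi, MStep.firstUp_ofHalves,
      MStep.secondUp_ofHalves] at *
    linarith

lemma ht_phi_add_secondUp (hfirst : (μ.step 0).firstUp) (j : Fin (m + 1)) :
    ht (phi μ) j + (μ.step j).secondUp.toInt = ht μ (j + 1) := by
  have := ht_phi_add_one hfirst j
  rw [ht_succ, dh_eq]
  linarith

lemma isMotzkin_phi_iff (hfirst : (μ.step 0).firstUp)
    (hlast : (μ.step (Fin.last m)).secondUp = false) :
    IsMotzkin (phi μ) ↔ IsMotzkin μ ∧ ∀ j, μ.step j = .W → 1 ≤ ht μ j := by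
  have hend : ht (phi μ) m = ht μ (m + 1) := by
    simpa [hlast] using ht_phi_add_secondUp hfirst (Fin.last m)
  constructor
  · rintro ⟨hnn, hend'⟩
    refine ⟨⟨fun j hj => ?_, by rw [← hend, hend']⟩, fun j hW => ?_⟩
    · rcases j with _ | j
      · simp [ht_zero]
      · have := ht_phi_add_secondUp hfirst ⟨j, by omega⟩
        have := hnn j (by omega)
        have := Bool.toInt_nonneg (μ.step ⟨j, by omega⟩).secondUp
        simp only at *
        linarith
    · have := ht_phi_add_one hfirst j
      have := hnn j (by omega)
      simp only [hW, MStep.firstUp, Bool.toInt_false] at *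
      linarith
  · rintro ⟨hμ, hW⟩
    refine ⟨fun j hj => ?_, by rw [hend, hμ.2]⟩
    have := ht_phi_add_one hfirst ⟨j, by omega⟩
    have := one_le_ht_add_firstUp hμ hW ⟨j, by omega⟩
    simp only at *
    linarith

lemma adm_iff_adm_phi (hfirst : (μ.step 0).firstUp) :
    (∀ j, Adm (μ.step j).firstUp (μ.wt j) (ht μ j)) ↔
      Adm true (μ.wt 0) 0 ∧ ∀ j : Fin m,
        Adm ((phi μ).step j).secondUp ((phi μ).wt j)
          (ht (phi μ) j + ((phi μ).step j).firstUp.toInt) := by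
  have hsucc (j : Fin m) : ht (phi μ) j + ((phi μ).step j).firstUp.toInt = ht μ j.succ := by
    simpa [phi] using ht_phi_add_secondUp hfirst j.castSucc
  rw [Fin.forall_fin_succ]
  simp only [hsucc]
  simp [hfirst, ht_zero, phi]

lemma mcond_iff_of_ends (hfirst : (μ.step 0).firstUp)
    (hlast : (μ.step (Fin.last m)).secondUp = false) :
    Mcond μ ↔ Adm true (μ.wt 0) 0 ∧ Hcond (phi μ) := by
  rw [mcond_iff, hcond_iff, isMotzkin_phi_iff hfirst hlast, adm_iff_adm_phi hfirst]
  tauto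

end Phi

lemma firstUp_step_zero_of_mcond {μ : WPath (m + 1)} (hμ : Mcond μ) : (μ.step 0).firstUp := by
  obtain ⟨⟨hnn, -⟩, hW, -⟩ := (mcond_iff μ).1 hμ
  have hsucc := ht_succ μ 0
  have := hnn 1 (by omega)
  cases hs : μ.step 0
  · rfl
  · simp_all [dh, ht_zero]
  · rfl
  · simpa [ht_zero] using hW 0 hs

lemma secondUp_step_last_of_mcond {μ : WPath (m + 1)} (hμ : Mcond μ) :
    (μ.step (Fin.last m)).secondUp = false := by
  obtain ⟨⟨hnn, hend⟩, hW, -⟩ := (mcond_iff μ).1 hμ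
  have hsucc := ht_succ μ (Fin.last m)
  have := hnn m (by omega)
  simp only [Fin.val_last] at hsucc
  cases hs : μ.step (Fin.last m)
  · simp only [hs, dh] at hsucc
    omega
  · rfl
  · rfl
  · have := hW _ hs
    simp only [hs, dh, Fin.val_last] at hsucc this
    omega

lemma adm_zero_and_hcond_phi_of_mcond {μ : WPath (m + 1)} (hμ : Mcond μ) :
    Adm true (μ.wt 0) 0 ∧ Hcond (phi μ) :=
  (mcond_iff_of_ends (firstUp_step_zero_of_mcond hμ) (secondUp_step_last_of_mcond hμ)).1 hμ

lemma hcond_phi_of_mcond {μ : WPath (m + 1)} (hμ : Mcond μ) : Hcond (phi μ) :=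
  (adm_zero_and_hcond_phi_of_mcond hμ).2

lemma mcond_psi_iff {w : ℕ × ℕ × ℕ} {ν : WPath m} :
    Mcond (psi w ν) ↔ Adm true w 0 ∧ Hcond ν := by
  rw [mcond_iff_of_ends (by simp) (by simp), phi_psi, psi_wt_zero]

lemma mcond_and_phi_eq_iff {ν : WPath m} (hν : Hcond ν) {μ : WPath (m + 1)} :
    Mcond μ ∧ phi μ = ν ↔ μ = psi (2, 0, 0) ν ∨ μ = psi (1, 1, 0) ν := by
  constructor
  · rintro ⟨hμ, rfl⟩
    have hpsi := psi_phi (firstUp_step_zero_of_mcond hμ) (secondUp_step_last_of_mcond hμ)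
    rcases adm_true_zero_iff.1 (adm_zero_and_hcond_phi_of_mcond hμ).1 with h | h
    · exact .inl (h ▸ hpsi.symm)
    · exact .inr (h ▸ hpsi.symm)
  · rintro (rfl | rfl) <;>
      exact ⟨mcond_psi_iff.2 ⟨by simp [adm_true_zero_iff], hν⟩, phi_psi _ _⟩

lemma rho_psi (w : ℕ × ℕ × ℕ) (ν : WPath m) : rho (psi w ν) = wtMonomial w * rho ν := by
  simp [rho, psi, wtMonomial, Fin.prod_univ_succ]

lemma existsUnique_of_fiber {ν : WPath m} {w w' : ℕ × ℕ × ℕ}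
    (hfib : ∀ μ, Mcond μ ∧ phi μ = ν ↔ μ = psi w ν ∨ μ = psi w' ν)
    (hne : wtMonomial w ≠ wtMonomial w') :
    ∃! μ, Mcond μ ∧ phi μ = ν ∧ rho μ = wtMonomial w * rho ν := by
  obtain ⟨hM, hphi⟩ := (hfib (psi w ν)).2 (.inl rfl)
  refine ⟨psi w ν, ⟨hM, hphi, rho_psi w ν⟩, ?_⟩
  rintro μ ⟨hμ, hμν, hρ⟩
  rcases (hfib μ).1 ⟨hμ, hμν⟩ with rfl | rfl
  · rfl
  · rw [rho_psi] at hρ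
    exact absurd (mul_right_cancel₀ (rho_ne_zero ν) hρ).symm hne

lemma ncard_fiber {ν : WPath m} (hν : Hcond ν) :
    {μ : WPath (m + 1) | Mcond μ ∧ phi μ = ν}.ncard = 2 := by
  rw [show {μ | Mcond μ ∧ phi μ = ν} = {psi (2, 0, 0) ν, psi (1, 1, 0) ν} from
    Set.ext fun _ => mcond_and_phi_eq_iff hν]
  exact Set.ncard_pair (by simp [psi_inj])

lemma finsum_mcond_rho :
    ∑ᶠ μ ∈ {μ : WPath (m + 1) | Mcond μ}, rho μ =
      (yv ^ 2 + yv * tv) * ∑ᶠ ν ∈ {ν : WPath m | Hcond ν}, rho ν := by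
  have hM : {μ : WPath (m + 1) | Mcond μ} =
      psi (2, 0, 0) '' {ν | Hcond ν} ∪ psi (1, 1, 0) '' {ν | Hcond ν} := by
    ext μ
    constructor
    · intro hμ
      have hH := hcond_phi_of_mcond hμ
      rcases (mcond_and_phi_eq_iff hH).1 ⟨hμ, rfl⟩ with h | h
      · exact .inl ⟨phi μ, hH, h.symm⟩
      · exact .inr ⟨phi μ, hH, h.symm⟩
    · rintro (⟨ν, hν, rfl⟩ | ⟨ν, hν, rfl⟩) <;>
        exact ((mcond_and_phi_eq_iff hν).2 (by simp)).1
  have hdisj :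
      Disjoint (psi (2, 0, 0) '' {ν : WPath m | Hcond ν}) (psi (1, 1, 0) '' {ν | Hcond ν}) :=
    Set.disjoint_left.2 fun _ ⟨ν, _, hν⟩ ⟨ν', _, hν'⟩ => by
      simp [← hν', psi_inj] at hν
  have hinj (w : ℕ × ℕ × ℕ) : Set.InjOn (psi w) {ν : WPath m | Hcond ν} :=
    fun _ _ _ _ h => (psi_inj.1 h).2
  rw [hM, finsum_mem_union hdisj (finite_setOf_hcond.image _) (finite_setOf_hcond.image _),
    finsum_mem_image (hinj _), finsum_mem_image (hinj _), add_mul, mul_finsum_mem, mul_finsum_mem]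
  simp only [rho_psi, wtMonomial_y2, wtMonomial_yt]

/-- Proposition 3.2: for `n ≥ 1` there is a two-to-one map `Φ : M_n → H_{n-1}`,
each fiber consisting of one path `μ` with `ρ(μ) = y² ρ(Φ μ)` and one with
`ρ(μ) = yt ρ(Φ μ)`; consequently `ρ(M_n) = (y² + yt) ρ(H_{n-1})`. -/
theorem statement12 (n : ℕ) (hn : 1 ≤ n) :
    ∃ Φ : WPath n → WPath (n - 1),
      (∀ μ : WPath n, Mcond μ → Hcond (Φ μ)) ∧
      (∀ μ : WPath n, Mcond μ →
        rho μ = yv ^ 2 * rho (Φ μ) ∨ rho μ = yv * tv * rho (Φ μ)) ∧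
      (∀ ν : WPath (n - 1), Hcond ν →
        ∃! μ : WPath n, Mcond μ ∧ Φ μ = ν ∧ rho μ = yv ^ 2 * rho ν) ∧
      (∀ ν : WPath (n - 1), Hcond ν →
        ∃! μ : WPath n, Mcond μ ∧ Φ μ = ν ∧ rho μ = yv * tv * rho ν) ∧
      (∀ ν : WPath (n - 1), Hcond ν →
        Set.ncard {μ : WPath n | Mcond μ ∧ Φ μ = ν} = 2) ∧
      (∑ᶠ μ ∈ {μ : WPath n | Mcond μ}, rho μ) =
        (yv ^ 2 + yv * tv) * ∑ᶠ ν ∈ {ν : WPath (n - 1) | Hcond ν}, rho ν := by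
  obtain ⟨m, rfl⟩ : ∃ m, n = m + 1 := ⟨n - 1, by omega⟩
  refine ⟨phi, fun μ hμ => hcond_phi_of_mcond hμ, fun μ hμ => ?_, fun ν hν => ?_,
    fun ν hν => ?_, fun ν hν => ncard_fiber hν, finsum_mcond_rho⟩
  · rcases (mcond_and_phi_eq_iff (hcond_phi_of_mcond hμ)).1 ⟨hμ, rfl⟩ with h | h
    · exact .inl (by rw [h, rho_psi, phi_psi, wtMonomial_y2])
    · exact .inr (by rw [h, rho_psi, phi_psi, wtMonomial_yt])
  · rw [← wtMonomial_y2]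
    exact existsUnique_of_fiber (fun _ => mcond_and_phi_eq_iff hν) wtMonomial_y2_ne_yt
  · rw [← wtMonomial_yt]
    exact existsUnique_of_fiber (fun _ => (mcond_and_phi_eq_iff hν).trans or_comm)
      wtMonomial_y2_ne_yt.symm
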